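/- Let W be a classical Weyl group of type A_{n−1}, D_n or B_n, and let Φ : C_n ⋊ ℂW → C_n ⊗ ℂW⁻ be the superalgebra isomorphism that is the identity on C_n and sends s_i ↦ −√−1·β_i t_i. Then for all i ≠ k: Φ((c_k − c_i)·s_{ik}) = −√−2·(1 ⊗ [k,i]); for W of type D_n or B_n, Φ((c_k + c_i)·s̄_{ik}) = −√−2·(1 ⊗ bar[k,i]); and for W of type B_n, Φ(c_i·τ_i) = −√−1·(1 ⊗ bar[i]). (Here √−2 = √2·√−1.) -/

import Mathlib

/-!
Every reflection is reached from a simple one by conjugating with simple reflections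
`s_{a,a+1}`: `s_{i,k+1} = s_{k,k+1} s_{ik} s_{k,k+1}`; `s̄_{ik}` comes from `s̄_{n-1,n}`, which
is `s_n` in type `D` and `τ_n s_{n-1,n} τ_n` in type `B`; and `τ_i` comes from `τ_n = s_n`.
Conjugation by `s_{a,a+1}` permutes the Clifford prefactor, and on the other side
`Φ(s_{a,a+1}) = -√-1 β_a t_{a+1}`, where `β_a² = 1` and `β_a` anticommutes with `t_{a+1}` and
with the (odd) image word `W`. So conjugating by `Φ(s_{a,a+1})` sends `W` to
`-t_{a+1} W t_{a+1}`, which is exactly the recursion satisfied by `[i,k]`, `bar[i,k]` and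
`bar[i]`. Induction along the chains then reduces everything to the simple reflections.
-/

noncomputable section

abbrev SignFn (n : ℕ) := Fin n → ℤˣ

/-- The permutation action on sign functions. -/
def permAut (n : ℕ) : Equiv.Perm (Fin n) →* MulAut (SignFn n) where
  toFun σ :=
    { toFun := fun f => f ∘ σ.symm
      invFun := fun f => f ∘ σ
      left_inv := fun f => by ext k; simp
      right_inv := fun f => by ext k; simp
      map_mul' := fun f g => rfl }
  map_one' := by ext f k; simp; rfl
  map_mul' := fun σ τ => by
    ext f k
    show (f ((σ * τ).symm k) : ℤ) = f (τ.symm (σ.symm k))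
    rw [Equiv.Perm.mul_def, Equiv.symm_trans_apply]

/-- The hyperoctahedral group `W_{B_n}` of signed permutations, as a semidirect product. -/
abbrev WB (n : ℕ) := SignFn n ⋊[permAut n] Equiv.Perm (Fin n)

/-- the transposition `s_{ij}` in `W_{B_n}`. -/
def sB {n : ℕ} (i j : Fin n) : WB n := ⟨1, Equiv.swap i j⟩

/-- the transposition with sign changes `s̄_{ij}` in `W_{B_n}`. -/
def sbarB {n : ℕ} (i j : Fin n) : WB n :=
  ⟨fun k => if k = i ∨ k = j then -1 else 1, Equiv.swap i j⟩

/-- the sign change `τ_i` at `i` in `W_{B_n}`. -/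
def tauB {n : ℕ} (i : Fin n) : WB n := ⟨fun k => if k = i then -1 else 1, 1⟩

/-- The signed-permutation action of `w ∈ W_{B_n}` on a basis vector `e_i`:
`w(e_i) = (sign) • e_{(index)}`; we record the pair (sign, index). -/
def actB {n : ℕ} (w : WB n) (i : Fin n) : ℂ × Fin n :=
  (((w.left (w.right i) : ℤ) : ℂ), w.right i)

/-- `W_{D_n}` as the subgroup of even signed permutations inside `W_{B_n}`. -/
def WDsub (n : ℕ) : Subgroup (WB n) where
  carrier := {w | ∏ k, w.left k = 1}
  one_mem' := by simp
  mul_mem' := by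
    intro a b ha hb
    simp only [Set.mem_setOf_eq] at *
    have h1 : (a * b).left = a.left * (permAut n a.right) b.left := rfl
    rw [h1]
    rw [show (∏ k, (a.left * (permAut n a.right) b.left) k) = (∏ k, a.left k) * ∏ k, (permAut n a.right) b.left k from Finset.prod_mul_distrib, ha, one_mul]
    calc ∏ k, (permAut n a.right) b.left k = ∏ k, b.left (a.right.symm k) := rfl
      _ = ∏ k, b.left k := Equiv.prod_comp a.right.symm b.left
      _ = 1 := hb
  inv_mem' := by
    intro a ha
    simp only [Set.mem_setOf_eq] at *
    have h1 : (a⁻¹).left = (permAut n a.right⁻¹) a.left⁻¹ := rfl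
    rw [h1]
    calc ∏ k, (permAut n a.right⁻¹) a.left⁻¹ k
        = ∏ k, a.left⁻¹ ((a.right⁻¹).symm k) := rfl
      _ = ∏ k, (a.left k)⁻¹ := Equiv.prod_comp _ _
      _ = (∏ k, a.left k)⁻¹ := by rw [← Finset.prod_inv_distrib]
      _ = 1 := by rw [ha]; simp

lemma sB_mem {n : ℕ} (i j : Fin n) : sB i j ∈ WDsub n := by
  simp [WDsub, sB]

lemma sbarB_mem {n : ℕ} {i j : Fin n} (h : i ≠ j) : sbarB i j ∈ WDsub n := by
  show ∏ k, (if k = i ∨ k = j then (-1 : ℤˣ) else 1) = 1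
  have step : ∀ k, (if k = i ∨ k = j then (-1 : ℤˣ) else 1)
      = (if k = i then -1 else 1) * (if k = j then -1 else 1) := by
    intro k
    by_cases h1 : k = i <;> by_cases h2 : k = j <;> simp_all
  simp_rw [step, Finset.prod_mul_distrib, Finset.prod_ite_eq', Finset.mem_univ, if_true]
  norm_num

/-- the transposition `s_{ij}` as an element of `W_{D_n}`. -/
def sD {n : ℕ} (i j : Fin n) : WDsub n := ⟨sB i j, sB_mem i j⟩

/-- the transposition with sign changes `s̄_{ij}` as an element of `W_{D_n}` (junk value `1`
when `i = j`). -/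
def sbarD {n : ℕ} (i j : Fin n) : WDsub n :=
  if h : i = j then 1 else ⟨sbarB i j, sbarB_mem h⟩

/-- The signed-permutation action for `W_{D_n}`. -/
def actD {n : ℕ} (w : WDsub n) (i : Fin n) : ℂ × Fin n := actB w.1 i

/-- The (trivially signed) permutation action of `S_n`. -/
def actA (n : ℕ) (σ : Equiv.Perm (Fin n)) (i : Fin n) : ℂ × Fin n := (1, σ i)

/-- Generators of the smash product `C_n ⋊ ℂW`: Clifford generators `c_i` and
group elements `w ∈ W`. -/
inductive KGen (n : ℕ) (G : Type) : Type
  | c : Fin n → KGen n G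
  | g : G → KGen n G

abbrev KF (n : ℕ) (G : Type) := FreeAlgebra ℂ (KGen n G)

def kfC {n : ℕ} {G : Type} (i : Fin n) : KF n G := FreeAlgebra.ι ℂ (KGen.c i)
def kfG {n : ℕ} {G : Type} (w : G) : KF n G := FreeAlgebra.ι ℂ (KGen.g w)

/-- The defining relations of the smash product `C_n ⋊ ℂW`: the Clifford relations,
the group algebra relations, and `w c_i w^{-1} = w(c_i)` where `w(c_i)` is given by the
(signed) permutation action `act`. -/
inductive KRel (n : ℕ) (G : Type) [Group G] (act : G → Fin n → ℂ × Fin n) :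
    KF n G → KF n G → Prop
  | cc (i : Fin n) : KRel n G act (kfC i * kfC i) 1
  | canti {i j : Fin n} (h : i ≠ j) : KRel n G act (kfC i * kfC j) (-(kfC j * kfC i))
  | gone : KRel n G act (kfG (1 : G)) 1
  | gmul (w w' : G) : KRel n G act (kfG w * kfG w') (kfG (w * w'))
  | gc (w : G) (i : Fin n) :
      KRel n G act (kfG w * kfC i) ((act w i).1 • (kfC (act w i).2 * kfG w))

/-- The smash product `C_n ⋊ ℂW`, presented by generators and relations. -/
abbrev Smash (n : ℕ) (G : Type) [Group G] (act : G → Fin n → ℂ × Fin n) :=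
  RingQuot (KRel n G act)

def kC {n : ℕ} {G : Type} [Group G] (act : G → Fin n → ℂ × Fin n) (i : Fin n) :
    Smash n G act := RingQuot.mkAlgHom ℂ (KRel n G act) (kfC i)
def kG {n : ℕ} {G : Type} [Group G] (act : G → Fin n → ℂ × Fin n) (w : G) :
    Smash n G act := RingQuot.mkAlgHom ℂ (KRel n G act) (kfG w)

section TWords

variable {A : Type} [Ring A] [Algebra ℂ A]

/-- `t_{i↑j} = t_i t_{i+1} ⋯ t_j` (1-based indices; empty product if `j < i`). -/
def tUp (T : ℕ → A) (i j : ℕ) : A := ((List.range' i (j + 1 - i)).map T).prod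

/-- `t_{i↓j} = t_i t_{i-1} ⋯ t_j` (1-based indices; empty product if `i < j`). -/
def tDown (T : ℕ → A) (i j : ℕ) : A := (((List.range' j (i + 1 - j)).map T).reverse).prod

/-- The element `[i,j] = (-1)^{j-i-1} t_{j-1} ⋯ t_{i+1} t_i t_{i+1} ⋯ t_{j-1}` for `i < j`
(1-based indices), with `[j,i] = -[i,j]` (junk value `0` for `i = j`). -/
def brK (T : ℕ → A) (i j : ℕ) : A :=
  if i < j then ((-1 : ℂ)) ^ (j - i - 1) • (tDown T (j - 1) i * tUp T (i + 1) (j - 1))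
  else if j < i then
    -(((-1 : ℂ)) ^ (i - j - 1) • (tDown T (i - 1) j * tUp T (j + 1) (i - 1)))
  else 0

/-- The element `bar[i,j] = (-1)^{j-i} t_{j↑n-1} t_{i↑n-2} t_n t_{n-1} t_n t_{n-2↓i} t_{n-1↓j}`
of type `B_n` for `i < j` (1-based indices, `nn = n`), with `bar[j,i] = bar[i,j]`
(junk value `0` for `i = j`). -/
def brBbar (T : ℕ → A) (nn i j : ℕ) : A :=
  if i < j then ((-1 : ℂ)) ^ (j - i) •
    (tUp T j (nn - 1) * tUp T i (nn - 2) * T nn * T (nn - 1) * T nn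
      * tDown T (nn - 2) i * tDown T (nn - 1) j)
  else if j < i then ((-1 : ℂ)) ^ (i - j) •
    (tUp T i (nn - 1) * tUp T j (nn - 2) * T nn * T (nn - 1) * T nn
      * tDown T (nn - 2) j * tDown T (nn - 1) i)
  else 0

/-- The element `bar[i,j] = (-1)^{j-i-1} t_{j↑n-1} t_{i↑n-2} t_n t_{n-2↓i} t_{n-1↓j}`
of type `D_n` for `i < j` (1-based indices), with `bar[j,i] = bar[i,j]`. -/
def brDbar (T : ℕ → A) (nn i j : ℕ) : A :=
  if i < j then ((-1 : ℂ)) ^ (j - i - 1) •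
    (tUp T j (nn - 1) * tUp T i (nn - 2) * T nn * tDown T (nn - 2) i * tDown T (nn - 1) j)
  else if j < i then ((-1 : ℂ)) ^ (i - j - 1) •
    (tUp T i (nn - 1) * tUp T j (nn - 2) * T nn * tDown T (nn - 2) j * tDown T (nn - 1) i)
  else 0

/-- The element `bar[i] = (-1)^{n-i} t_i ⋯ t_{n-1} t_n t_{n-1} ⋯ t_i` of type `B_n`
(1-based index `i`). -/
def brBi (T : ℕ → A) (nn i : ℕ) : A :=
  ((-1 : ℂ)) ^ (nn - i) • (tUp T i (nn - 1) * T nn * tDown T (nn - 1) i)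

/-- `{i,j} = z^{j-i-1} t_{j-1} ⋯ t_{i+1} t_i t_{i+1} ⋯ t_{j-1}` for `i < j` in the covering
algebra, with `{j,i} = z {i,j}`. -/
def cbrK (Z : A) (T : ℕ → A) (i j : ℕ) : A :=
  if i < j then Z ^ (j - i - 1) * (tDown T (j - 1) i * tUp T (i + 1) (j - 1))
  else if j < i then Z * (Z ^ (i - j - 1) * (tDown T (i - 1) j * tUp T (j + 1) (i - 1)))
  else 0

/-- `bar{i,j}` of type `B_n` in the covering algebra, with `bar{j,i} = bar{i,j}`. -/
def cbrBbar (Z : A) (T : ℕ → A) (nn i j : ℕ) : A :=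
  if i < j then Z ^ (j - i) *
    (tUp T j (nn - 1) * tUp T i (nn - 2) * T nn * T (nn - 1) * T nn
      * tDown T (nn - 2) i * tDown T (nn - 1) j)
  else if j < i then Z ^ (i - j) *
    (tUp T i (nn - 1) * tUp T j (nn - 2) * T nn * T (nn - 1) * T nn
      * tDown T (nn - 2) j * tDown T (nn - 1) i)
  else 0

/-- `bar{i,j}` of type `D_n` in the covering algebra, with `bar{j,i} = bar{i,j}`. -/
def cbrDbar (Z : A) (T : ℕ → A) (nn i j : ℕ) : A :=
  if i < j then Z ^ (j - i - 1) *
    (tUp T j (nn - 1) * tUp T i (nn - 2) * T nn * tDown T (nn - 2) i * tDown T (nn - 1) j)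
  else if j < i then Z ^ (i - j - 1) *
    (tUp T i (nn - 1) * tUp T j (nn - 2) * T nn * tDown T (nn - 2) j * tDown T (nn - 1) i)
  else 0

/-- `{i} = z^{n-i} t_i ⋯ t_{n-1} t_n t_{n-1} ⋯ t_i` in the covering algebra of type `B_n`. -/
def cbrBi (Z : A) (T : ℕ → A) (nn i : ℕ) : A :=
  Z ^ (nn - i) * (tUp T i (nn - 1) * T nn * tDown T (nn - 1) i)

/-- `β_i = (c_i - c_{i+1})/√2` for `1 ≤ i ≤ n-1`, given the Clifford generators `c`. -/
def betaAof {n : ℕ} (c : Fin n → A) (a : Fin (n - 1)) : A :=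
  ((Real.sqrt 2 : ℂ))⁻¹ • (c ⟨a.val, by have := a.isLt; omega⟩
      - c ⟨a.val + 1, by have := a.isLt; omega⟩)

/-- `β_i` of type `B_n`: `(c_i - c_{i+1})/√2` for `i ≤ n-1`, and `β_n = c_n`. -/
def betaBof {n : ℕ} (c : Fin n → A) (a : Fin n) : A :=
  if h : (a : ℕ) + 1 < n then ((Real.sqrt 2 : ℂ))⁻¹ • (c a - c ⟨a.val + 1, h⟩) else c a

/-- `β_i` of type `D_n`: `(c_i - c_{i+1})/√2` for `i ≤ n-1`, and `β_n = (c_{n-1} + c_n)/√2`. -/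
def betaDof {n : ℕ} (c : Fin n → A) (a : Fin n) : A :=
  if h : (a : ℕ) + 1 < n then ((Real.sqrt 2 : ℂ))⁻¹ • (c a - c ⟨a.val + 1, h⟩)
  else ((Real.sqrt 2 : ℂ))⁻¹ • (c ⟨n - 2, by have := a.isLt; omega⟩
      + c ⟨n - 1, by have := a.isLt; omega⟩)

end TWords

/-- The simple reflections of `S_n` (type `A_{n-1}`): `s_i = (i, i+1)`. -/
def simpleA {n : ℕ} (a : Fin (n - 1)) : Equiv.Perm (Fin n) :=
  Equiv.swap ⟨a.val, by have := a.isLt; omega⟩ ⟨a.val + 1, by have := a.isLt; omega⟩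

/-- The simple reflections of `W_{B_n}`: `s_i = (i, i+1)` for `i ≤ n-1` and `s_n = τ_n`. -/
def simpleB {n : ℕ} (a : Fin n) : WB n :=
  if h : (a : ℕ) + 1 < n then sB a ⟨a.val + 1, h⟩ else tauB a

/-- The simple reflections of `W_{D_n}`: `s_i = (i, i+1)` for `i ≤ n-1` and
`s_n = s̄_{n-1,n}`. -/
def simpleD {n : ℕ} (a : Fin n) : WDsub n :=
  if h : (a : ℕ) + 1 < n then sD a ⟨a.val + 1, h⟩
  else sbarD ⟨n - 2, by have := a.isLt; omega⟩ ⟨n - 1, by have := a.isLt; omega⟩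

/-- Generators of the super tensor product `C_n ⊗ ℂW⁻`: Clifford generators `c_i` and the
odd generators `t_a` of the spin Weyl group algebra. -/
inductive TCGen (n m : ℕ) : Type
  | c : Fin n → TCGen n m
  | t : Fin m → TCGen n m

abbrev TCF (n m : ℕ) := FreeAlgebra ℂ (TCGen n m)

def tcC {n m : ℕ} (i : Fin n) : TCF n m := FreeAlgebra.ι ℂ (TCGen.c i)
def tcT {n m : ℕ} (a : Fin m) : TCF n m := FreeAlgebra.ι ℂ (TCGen.t a)

/-- `t_k` for a 1-based index `k`, extended by `1` out of range. -/
def tcTn {n m : ℕ} (k : ℕ) : TCF n m := if h : 1 ≤ k ∧ k ≤ m then tcT ⟨k - 1, by omega⟩ else 1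
/-- The defining relations of the super tensor product `C_n ⊗ ℂW⁻` of type `A_{n-1}`:
the Clifford relations, the spin Weyl group algebra relations, and the anticommutation of
the odd generators `c_i` and `t_a`. -/
inductive TCRelA (n : ℕ) : TCF n (n - 1) → TCF n (n - 1) → Prop
  | csq (i : Fin n) : TCRelA n (tcC i * tcC i) 1
  | canti {i j : Fin n} (h : i ≠ j) : TCRelA n (tcC i * tcC j) (-(tcC j * tcC i))
  | ct (i : Fin n) (a : Fin (n - 1)) : TCRelA n (tcC i * tcT a) (-(tcT a * tcC i))
  | tsq (a : Fin (n - 1)) : TCRelA n (tcT a * tcT a) 1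
  | tbraid (a b : Fin (n - 1)) (h : (b : ℕ) = (a : ℕ) + 1) :
      TCRelA n (tcT a * tcT b * tcT a) (tcT b * tcT a * tcT b)
  | tfar (a b : Fin (n - 1)) (h : (a : ℕ) + 1 < (b : ℕ)) :
      TCRelA n (tcT a * tcT b * tcT a * tcT b) (-1)

/-- The super tensor product `C_n ⊗ ℂW⁻` of type `A_{n-1}`. -/
abbrev TCA (n : ℕ) := RingQuot (TCRelA n)

def qtcCA {n : ℕ} : Fin n → TCA n :=
  fun i => RingQuot.mkAlgHom ℂ (TCRelA n) (tcC i)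
def qtcTA {n : ℕ} : Fin (n - 1) → TCA n :=
  fun a => RingQuot.mkAlgHom ℂ (TCRelA n) (tcT a)
/-- `t_k` (1-based) in `C_n ⊗ ℂW⁻` of type `A_{n-1}`. -/
def qtcTnA {n : ℕ} (k : ℕ) : TCA n :=
  RingQuot.mkAlgHom ℂ (TCRelA n) (tcTn k)
/-- The defining relations of the super tensor product `C_n ⊗ ℂW⁻` of type `B_n`:
the Clifford relations, the spin Weyl group algebra relations, and the anticommutation of
the odd generators `c_i` and `t_a`. -/
inductive TCRelB (n : ℕ) : TCF n n → TCF n n → Prop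
  | csq (i : Fin n) : TCRelB n (tcC i * tcC i) 1
  | canti {i j : Fin n} (h : i ≠ j) : TCRelB n (tcC i * tcC j) (-(tcC j * tcC i))
  | ct (i : Fin n) (a : Fin n) : TCRelB n (tcC i * tcT a) (-(tcT a * tcC i))
  | tsq (a : Fin n) : TCRelB n (tcT a * tcT a) 1
  | tbraid (a b : Fin n) (h : (b : ℕ) = (a : ℕ) + 1) (h2 : (b : ℕ) + 1 < n) :
      TCRelB n (tcT a * tcT b * tcT a) (tcT b * tcT a * tcT b)
  | tfar (a b : Fin n) (h : (a : ℕ) + 1 < (b : ℕ)) (h2 : (b : ℕ) + 1 < n) :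
      TCRelB n (tcT a * tcT b * tcT a * tcT b) (-1)
  | tfarn (a b : Fin n) (h : (a : ℕ) + 2 < n) (hb : (b : ℕ) + 1 = n) :
      TCRelB n (tcT a * tcT b * tcT a * tcT b) (-1)
  | tquad (a b : Fin n) (ha : (a : ℕ) + 2 = n) (hb : (b : ℕ) + 1 = n) :
      TCRelB n ((tcT a * tcT b) ^ 4) (-1)

/-- The super tensor product `C_n ⊗ ℂW⁻` of type `B_n`. -/
abbrev TCB (n : ℕ) := RingQuot (TCRelB n)

def qtcCB {n : ℕ} : Fin n → TCB n :=
  fun i => RingQuot.mkAlgHom ℂ (TCRelB n) (tcC i)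
def qtcTB {n : ℕ} : Fin n → TCB n :=
  fun a => RingQuot.mkAlgHom ℂ (TCRelB n) (tcT a)
/-- `t_k` (1-based) in `C_n ⊗ ℂW⁻` of type `B_n`. -/
def qtcTnB {n : ℕ} (k : ℕ) : TCB n :=
  RingQuot.mkAlgHom ℂ (TCRelB n) (tcTn k)
/-- The defining relations of the super tensor product `C_n ⊗ ℂW⁻` of type `D_n`:
the Clifford relations, the spin Weyl group algebra relations, and the anticommutation of
the odd generators `c_i` and `t_a`. -/
inductive TCRelD (n : ℕ) : TCF n n → TCF n n → Prop
  | csq (i : Fin n) : TCRelD n (tcC i * tcC i) 1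
  | canti {i j : Fin n} (h : i ≠ j) : TCRelD n (tcC i * tcC j) (-(tcC j * tcC i))
  | ct (i : Fin n) (a : Fin n) : TCRelD n (tcC i * tcT a) (-(tcT a * tcC i))
  | tsq (a : Fin n) : TCRelD n (tcT a * tcT a) 1
  | tbraid (a b : Fin n) (h : (b : ℕ) = (a : ℕ) + 1) (h2 : (b : ℕ) + 1 < n) :
      TCRelD n (tcT a * tcT b * tcT a) (tcT b * tcT a * tcT b)
  | tfar (a b : Fin n) (h : (a : ℕ) + 1 < (b : ℕ)) (h2 : (b : ℕ) + 1 < n) :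
      TCRelD n (tcT a * tcT b * tcT a * tcT b) (-1)
  | tfarn (a b : Fin n) (h1 : (a : ℕ) + 3 ≠ n) (h2 : (a : ℕ) + 1 < n)
      (hb : (b : ℕ) + 1 = n) : TCRelD n (tcT a * tcT b * tcT a * tcT b) (-1)
  | tbraidn (a b : Fin n) (ha : (a : ℕ) + 3 = n) (hb : (b : ℕ) + 1 = n) :
      TCRelD n (tcT a * tcT b * tcT a) (tcT b * tcT a * tcT b)

/-- The super tensor product `C_n ⊗ ℂW⁻` of type `D_n`. -/
abbrev TCD (n : ℕ) := RingQuot (TCRelD n)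

def qtcCD {n : ℕ} : Fin n → TCD n :=
  fun i => RingQuot.mkAlgHom ℂ (TCRelD n) (tcC i)
def qtcTD {n : ℕ} : Fin n → TCD n :=
  fun a => RingQuot.mkAlgHom ℂ (TCRelD n) (tcT a)
/-- `t_k` (1-based) in `C_n ⊗ ℂW⁻` of type `D_n`. -/
def qtcTnD {n : ℕ} (k : ℕ) : TCD n :=
  RingQuot.mkAlgHom ℂ (TCRelD n) (tcTn k)

open Complex (I)

section Words

variable {A : Type} [Ring A] (T : ℕ → A)

lemma tUp_of_lt {i j : ℕ} (h : j < i) : tUp T i j = 1 := by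
  simp [tUp, show j + 1 - i = 0 by omega]

lemma tUp_succ_right {i j : ℕ} (h : i ≤ j + 1) : tUp T i (j + 1) = tUp T i j * T (j + 1) := by
  rw [tUp, tUp, show j + 1 + 1 - i = (j + 1 - i) + 1 by omega, List.range'_concat,
    show i + 1 * (j + 1 - i) = j + 1 by omega]
  simp

lemma tUp_eq_mul_tUp {i j : ℕ} (h : i ≤ j) : tUp T i j = T i * tUp T (i + 1) j := by
  rw [tUp, tUp, show j + 1 - i = (j - i) + 1 by omega, List.range'_succ,
    show j + 1 - (i + 1) = j - i by omega]
  simp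

lemma tDown_of_lt {i j : ℕ} (h : i < j) : tDown T i j = 1 := by
  simp [tDown, show i + 1 - j = 0 by omega]

lemma tDown_self (i : ℕ) : tDown T i i = T i := by
  simp [tDown]

lemma tDown_succ_left {i j : ℕ} (h : j ≤ i + 1) :
    tDown T (i + 1) j = T (i + 1) * tDown T i j := by
  rw [tDown, tDown, show i + 1 + 1 - j = (i + 1 - j) + 1 by omega, List.range'_concat,
    show j + 1 * (i + 1 - j) = i + 1 by omega]
  simp

lemma tDown_eq_tDown_mul {i j : ℕ} (h : j ≤ i) : tDown T i j = tDown T i (j + 1) * T j := by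
  rw [tDown, tDown, show i + 1 - j = (i - j) + 1 by omega, List.range'_succ,
    show i + 1 - (j + 1) = i - j by omega]
  simp

variable [Algebra ℂ A]

lemma brK_self_succ (i : ℕ) : brK T i (i + 1) = T i := by
  simp [brK, tDown_self, tUp_of_lt]

lemma brK_succ_right {i j : ℕ} (h : i < j) : brK T i (j + 1) = -(T j * brK T i j * T j) := by
  obtain ⟨m, rfl⟩ : ∃ m, j = m + 1 := ⟨j - 1, by omega⟩
  rw [brK, brK, if_pos (by omega), if_pos h, show m + 1 + 1 - 1 = m + 1 by omega,
    show m + 1 - 1 = m by omega, show m + 1 + 1 - i - 1 = (m + 1 - i - 1) + 1 by omega,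
    tDown_succ_left T (by omega), tUp_succ_right T (by omega),
    pow_succ, mul_neg_one, neg_smul]
  noncomm_ring

lemma brK_antisymm {i j : ℕ} (h : i < j) : brK T j i = -brK T i j := by
  rw [brK, brK, if_neg (by omega), if_pos h, if_pos h]

lemma brDbar_comm (nn : ℕ) {i j : ℕ} (h : i < j) : brDbar T nn j i = brDbar T nn i j := by
  rw [brDbar, brDbar, if_neg (by omega), if_pos h, if_pos h]

lemma brBbar_comm (nn : ℕ) {i j : ℕ} (h : i < j) : brBbar T nn j i = brBbar T nn i j := by
  rw [brBbar, brBbar, if_neg (by omega), if_pos h, if_pos h]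

lemma brDbar_pred_self {nn : ℕ} (h : 2 ≤ nn) : brDbar T nn (nn - 1) nn = T nn := by
  rw [brDbar, if_pos (by omega), show nn - (nn - 1) - 1 = 0 by omega,
    tUp_of_lt T (by omega), tUp_of_lt T (by omega), tDown_of_lt T (by omega),
    tDown_of_lt T (by omega)]
  simp

lemma brBbar_pred_self {nn : ℕ} (h : 2 ≤ nn) :
    brBbar T nn (nn - 1) nn = -(T nn * T (nn - 1) * T nn) := by
  rw [brBbar, if_pos (by omega), show nn - (nn - 1) = 1 by omega,
    tUp_of_lt T (by omega), tUp_of_lt T (by omega), tDown_of_lt T (by omega),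
    tDown_of_lt T (by omega)]
  simp [mul_assoc]

lemma brDbar_eq_conj_left {nn i : ℕ} (h : i + 1 < nn) :
    brDbar T nn i nn = -(T i * brDbar T nn (i + 1) nn * T i) := by
  rw [brDbar, brDbar, if_pos (by omega), if_pos (by omega),
    tDown_of_lt T (show nn - 1 < nn by omega), tUp_of_lt T (show nn - 1 < nn by omega),
    tUp_eq_mul_tUp T (by omega : i ≤ nn - 2),
    tDown_eq_tDown_mul T (by omega : i ≤ nn - 2),
    show nn - i - 1 = (nn - (i + 1) - 1) + 1 by omega,
    pow_succ, mul_neg_one, neg_smul]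
  noncomm_ring

lemma brBbar_eq_conj_left {nn i : ℕ} (h : i + 1 < nn) :
    brBbar T nn i nn = -(T i * brBbar T nn (i + 1) nn * T i) := by
  rw [brBbar, brBbar, if_pos (by omega), if_pos (by omega),
    tDown_of_lt T (show nn - 1 < nn by omega), tUp_of_lt T (show nn - 1 < nn by omega),
    tUp_eq_mul_tUp T (by omega : i ≤ nn - 2),
    tDown_eq_tDown_mul T (by omega : i ≤ nn - 2), show nn - i = (nn - (i + 1)) + 1 by omega,
    pow_succ, mul_neg_one, neg_smul]
  noncomm_ring

lemma brDbar_eq_conj_right {nn i j : ℕ} (h1 : i < j) (h2 : j < nn) :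
    brDbar T nn i j = -(T j * brDbar T nn i (j + 1) * T j) := by
  rw [brDbar, brDbar, if_pos h1, if_pos (by omega), tUp_eq_mul_tUp T (by omega : j ≤ nn - 1),
    tDown_eq_tDown_mul T (by omega : j ≤ nn - 1), show j + 1 - i - 1 = (j - i - 1) + 1 by omega,
    pow_succ, mul_neg_one, neg_smul]
  noncomm_ring

lemma brBbar_eq_conj_right {nn i j : ℕ} (h1 : i < j) (h2 : j < nn) :
    brBbar T nn i j = -(T j * brBbar T nn i (j + 1) * T j) := by
  rw [brBbar, brBbar, if_pos h1, if_pos (by omega), tUp_eq_mul_tUp T (by omega : j ≤ nn - 1),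
    tDown_eq_tDown_mul T (by omega : j ≤ nn - 1), show j + 1 - i = (j - i) + 1 by omega,
    pow_succ, mul_neg_one, neg_smul]
  noncomm_ring

lemma brBi_self {nn : ℕ} (h : 1 ≤ nn) : brBi T nn nn = T nn := by
  simp [brBi, tUp_of_lt T (show nn - 1 < nn by omega), tDown_of_lt T (show nn - 1 < nn by omega)]

lemma brBi_eq_conj {nn i : ℕ} (h : i < nn) : brBi T nn i = -(T i * brBi T nn (i + 1) * T i) := by
  rw [brBi, brBi, tUp_eq_mul_tUp T (by omega : i ≤ nn - 1),
    tDown_eq_tDown_mul T (by omega : i ≤ nn - 1), show nn - i = (nn - (i + 1)) + 1 by omega,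
    pow_succ, mul_neg_one, neg_smul]
  noncomm_ring

end Words

section Anticommutes

variable {ι A : Type} [Ring A]

def Anticommutes (c : ι → A) (y : A) : Prop := ∀ r, c r * y = -(y * c r)

variable {c : ι → A}

lemma Anticommutes.neg_conj {t y : A} (ht : Anticommutes c t) (hy : Anticommutes c y) :
    Anticommutes c (-(t * y * t)) := fun r => calc
  c r * -(t * y * t) = -((c r * t) * y * t) := by noncomm_ring
  _ = t * (c r * y) * t := by rw [ht r]; noncomm_ring
  _ = -(t * y * (c r * t)) := by rw [hy r]; noncomm_ring
  _ = -(-(t * y * t) * c r) := by rw [ht r]; noncomm_ring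

lemma Anticommutes.smul_sub_mul [Algebra ℂ A] {y : A} (h : Anticommutes c y)
    (z : ℂ) (a b : ι) : (z • (c a - c b)) * y = -(y * (z • (c a - c b))) := by
  simp only [smul_mul_assoc, mul_smul_comm, sub_mul, mul_sub, h a, h b]
  module

end Anticommutes

section CliffordIdentities

variable {A : Type} [Ring A]

lemma add_mul_self_of_anticomm {a b : A} (ha : a * a = 1) (hb : b * b = 1)
    (hab : a * b = -(b * a)) : (a + b) * (a + b) = 2 := by
  rw [add_mul, mul_add, mul_add, ha, hb, hab, ← one_add_one_eq_two]
  abel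

lemma sub_mul_self_of_anticomm {a b : A} (ha : a * a = 1) (hb : b * b = 1)
    (hab : a * b = -(b * a)) : (a - b) * (a - b) = 2 := by
  rw [sub_mul, mul_sub, mul_sub, ha, hb, hab, ← one_add_one_eq_two]
  abel

lemma sqrt_two_mul_sqrt_two : (Real.sqrt 2 : ℂ) * (Real.sqrt 2 : ℂ) = 2 := by
  rw [← Complex.ofReal_mul, Real.mul_self_sqrt zero_le_two, Complex.ofReal_ofNat]

variable [Algebra ℂ A]

lemma inv_sqrt_two_smul_mul_self {x : A} (hx : x * x = 2) :
    ((Real.sqrt 2 : ℂ)⁻¹ • x) * ((Real.sqrt 2 : ℂ)⁻¹ • x) = 1 := by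
  rw [smul_mul_smul_comm, hx, ← mul_inv, sqrt_two_mul_sqrt_two, Algebra.smul_def,
    ← map_ofNat (algebraMap ℂ A) 2, ← map_mul, inv_mul_cancel₀ two_ne_zero, map_one]

lemma mul_neg_I_smul_inv_sqrt_two_smul_mul {x : A} (hx : x * x = 2) (t : A) :
    x * -(I • (((Real.sqrt 2 : ℂ)⁻¹ • x) * t)) = -((Real.sqrt 2 : ℂ) * I) • t := by
  have hs : (Real.sqrt 2 : ℂ) ≠ 0 := by simp
  rw [mul_neg, mul_smul_comm, smul_mul_assoc, mul_smul_comm, ← mul_assoc, hx, two_mul,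
    ← two_smul ℂ, smul_smul, smul_smul, ← neg_smul, ← sqrt_two_mul_sqrt_two]
  congr 1
  field_simp

lemma mul_neg_I_smul_mul {a : A} (ha : a * a = 1) (t : A) : a * -(I • (a * t)) = -(I • t) := by
  rw [mul_neg, mul_smul_comm, ← mul_assoc, ha, one_mul]

lemma neg_I_smul_mul_conj {β t W : A} (z : ℂ) (hβ : β * β = 1) (hβt : β * t = -(t * β))
    (hβW : β * W = -(W * β)) :
    -(I • (β * t)) * (z • W) * -(I • (β * t)) = z • -(t * W * t) := by
  have hWβ : W * β = -(β * W) := by rw [hβW, neg_neg]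
  have htβ : t * β = -(β * t) := by rw [hβt, neg_neg]
  have hconj : (β * t) * W * (β * t) = t * W * t := calc
    (β * t) * W * (β * t) = β * t * (W * β) * t := by noncomm_ring
    _ = -(β * (t * β) * W * t) := by rw [hWβ]; noncomm_ring
    _ = β * β * (t * W * t) := by rw [htβ]; noncomm_ring
    _ = t * W * t := by rw [hβ, one_mul]
  simp only [neg_mul, mul_neg, neg_neg, smul_mul_smul_comm, hconj, smul_neg, ← neg_smul]
  congr 1
  linear_combination z * Complex.I_mul_I

end CliffordIdentities

section SmashProduct

variable {n : ℕ} {G : Type} [Group G] {act : G → Fin n → ℂ × Fin n}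

lemma kG_mul_kG (w w' : G) : kG act w * kG act w' = kG act (w * w') := by
  rw [kG, kG, kG, ← map_mul]
  exact RingQuot.mkAlgHom_rel ℂ (KRel.gmul w w')

lemma kG_mul_kC (w : G) (i : Fin n) :
    kG act w * kC act i = (act w i).1 • (kC act (act w i).2 * kG act w) := by
  unfold kG kC
  rw [← map_mul, RingQuot.mkAlgHom_rel ℂ (KRel.gc w i), map_smul, map_mul]

lemma kG_mul_kC_of_act_eq {w : G} {i j : Fin n} (h : act w i = (1, j)) :
    kG act w * kC act i = kC act j * kG act w := by
  rw [kG_mul_kC, h, one_smul]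

variable {A : Type} [Ring A] [Algebra ℂ A] {F : Type} [FunLike F (Smash n G act) A]
  [AlgHomClass F ℂ (Smash n G act) A]

lemma map_mul_kG_conj (Φ : F) {g w : G} {X Y : Smash n G act}
    (hg : kG act g * X = Y * kG act g) {β t W : A} {z : ℂ}
    (hΦg : Φ (kG act g) = -(I • (β * t))) (hβ : β * β = 1) (hβt : β * t = -(t * β))
    (hβW : β * W = -(W * β)) (hX : Φ (X * kG act w) = z • W) :
    Φ (Y * kG act (g * w * g)) = z • -(t * W * t) := by
  rw [← neg_I_smul_mul_conj z hβ hβt hβW, ← hΦg, ← hX, ← map_mul, ← map_mul,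
    ← kG_mul_kG, ← kG_mul_kG]
  simp only [← mul_assoc]
  rw [← hg]

end SmashProduct

section Reflections

variable {n : ℕ} {G : Type} [Group G] {act : G → Fin n → ℂ × Fin n}
  {A : Type} [Ring A] [Algebra ℂ A] {F : Type} [FunLike F (Smash n G act) A]

/-- `s a b` plays the transposition `s_{ab}`. The indices `a : Fin n` are 0-based while
`T k = t_k` is 1-based, so `map_kG_s` says `s_{a,a+1} ↦ -√-1 β_a t_{a+1}`. -/
structure MapsSimpleReflections (Φ : F) (c : Fin n → A) (T : ℕ → A)
    (s : Fin n → Fin n → G) : Prop where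
  map_kC : ∀ i, Φ (kC act i) = c i
  c_mul_self : ∀ i, c i * c i = 1
  c_anticomm : ∀ i j, i ≠ j → c i * c j = -(c j * c i)
  anticommutes_T : ∀ k, 1 ≤ k → k < n → Anticommutes c (T k)
  act_s : ∀ a b i, act (s a b) i = (1, Equiv.swap a b i)
  s_comm : ∀ a b, s a b = s b a
  s_conj : ∀ u v x y, s u v * s x y * s u v = s (Equiv.swap u v x) (Equiv.swap u v y)
  map_kG_s : ∀ a b : Fin n, (b : ℕ) = a + 1 →
    Φ (kG act (s a b)) = -(I • (((Real.sqrt 2 : ℂ)⁻¹ • (c a - c b)) * T (a + 1)))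

namespace MapsSimpleReflections

variable {Φ : F} {c : Fin n → A} {T : ℕ → A} {s : Fin n → Fin n → G}

lemma kG_s_mul_kC (h : MapsSimpleReflections Φ c T s) (a b i : Fin n) :
    kG act (s a b) * kC act i = kC act (Equiv.swap a b i) * kG act (s a b) :=
  kG_mul_kC_of_act_eq (h.act_s a b i)

variable [AlgHomClass F ℂ (Smash n G act) A]

lemma map_conj_s (h : MapsSimpleReflections Φ c T s) {a b : Fin n} (hab : (b : ℕ) = a + 1)
    {w : G} {X Y : Smash n G act} (hg : kG act (s a b) * X = Y * kG act (s a b)) {W : A}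
    {z : ℂ} (hW : Anticommutes c W) (hX : Φ (X * kG act w) = z • W) :
    Φ (Y * kG act (s a b * w * s a b)) = z • -(T (a + 1) * W * T (a + 1)) ∧
      Anticommutes c (-(T (a + 1) * W * T (a + 1))) := by
  have hT := h.anticommutes_T (a + 1) (by omega) (by omega)
  have hβ := inv_sqrt_two_smul_mul_self (sub_mul_self_of_anticomm (h.c_mul_self a)
    (h.c_mul_self b) (h.c_anticomm a b (Fin.ne_of_val_ne (by omega))))
  exact ⟨map_mul_kG_conj Φ hg (h.map_kG_s a b hab) hβ (hT.smul_sub_mul _ a b)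
    (hW.smul_sub_mul _ a b) hX, hT.neg_conj hW⟩

theorem map_sub_mul_kG_of_lt (h : MapsSimpleReflections Φ c T s) {i k : Fin n} (hik : i < k) :
    Φ ((kC act k - kC act i) * kG act (s i k))
        = ((Real.sqrt 2 : ℂ) * I) • brK T (i + 1) (k + 1) ∧
      Anticommutes c (brK T (i + 1) (k + 1)) := by
  obtain ⟨j, hj⟩ : ∃ j : Fin n, (k : ℕ) = j + 1 :=
    ⟨⟨k - 1, by omega⟩, (Nat.sub_add_cancel (by omega)).symm⟩
  rw [hj]
  rcases eq_or_lt_of_le (show i ≤ j by rw [Fin.le_iff_val_le_val]; omega) with rfl | hij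
  · rw [brK_self_succ, map_mul, map_sub, h.map_kC, h.map_kC, h.map_kG_s i k hj, ← neg_sub (c i),
      neg_mul, mul_neg_I_smul_inv_sqrt_two_smul_mul (sub_mul_self_of_anticomm (h.c_mul_self i)
        (h.c_mul_self k) (h.c_anticomm i k (Fin.ne_of_val_ne (by omega)))), neg_smul, neg_neg]
    exact ⟨rfl, h.anticommutes_T _ (by omega) (by omega)⟩
  · have hs : s j k * s i j * s j k = s i k := by
      rw [h.s_conj, Equiv.swap_apply_of_ne_of_ne (Fin.ne_of_val_ne (by omega))
        (Fin.ne_of_val_ne (by omega)), Equiv.swap_apply_left]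
    have hg : kG act (s j k) * (kC act j - kC act i) = (kC act k - kC act i) * kG act (s j k) := by
      rw [mul_sub, sub_mul, h.kG_s_mul_kC, h.kG_s_mul_kC, Equiv.swap_apply_left,
        Equiv.swap_apply_of_ne_of_ne (Fin.ne_of_val_ne (by omega)) (Fin.ne_of_val_ne (by omega))]
    obtain ⟨ih, ih_anti⟩ := h.map_sub_mul_kG_of_lt hij
    rw [brK_succ_right T (by omega), ← hs]
    exact h.map_conj_s hj hg ih_anti ih
termination_by (k : ℕ)

theorem map_sub_mul_kG (h : MapsSimpleReflections Φ c T s) {i k : Fin n} (hik : i ≠ k) :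
    Φ ((kC act k - kC act i) * kG act (s i k))
      = -(((Real.sqrt 2 : ℂ) * I) • brK T (k + 1) (i + 1)) := by
  rcases lt_or_gt_of_ne hik with hlt | hlt
  · rw [brK_antisymm T (by omega), smul_neg, neg_neg]
    exact (h.map_sub_mul_kG_of_lt hlt).1
  · have e : (kC act k - kC act i) * kG act (s i k)
        = -((kC act i - kC act k) * kG act (s k i)) := by
      rw [h.s_comm, ← neg_sub]
      exact neg_mul (kC act i - kC act k) (kG act (s k i))
    rw [e, map_neg, (h.map_sub_mul_kG_of_lt hlt).1]

section Bar

variable {σ : Fin n → Fin n → G} {W : ℕ → ℕ → A}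

theorem map_add_mul_kG_of_lt (h : MapsSimpleReflections Φ c T s)
    (hσ : ∀ u v x y, x ≠ y →
      s u v * σ x y * s u v = σ (Equiv.swap u v x) (Equiv.swap u v y))
    (hW_left : ∀ i, i + 1 < n → W i n = -(T i * W (i + 1) n * T i))
    (hW_right : ∀ i j, i < j → j < n → W i j = -(T j * W i (j + 1) * T j))
    (hbase : ∀ i k : Fin n, (i : ℕ) + 2 = n → (k : ℕ) + 1 = n →
      Φ ((kC act k + kC act i) * kG act (σ i k)) = -((Real.sqrt 2 : ℂ) * I) • W (n - 1) n ∧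
        Anticommutes c (W (n - 1) n))
    {i k : Fin n} (hik : i < k) :
    Φ ((kC act k + kC act i) * kG act (σ i k))
        = -((Real.sqrt 2 : ℂ) * I) • W (i + 1) (k + 1) ∧
      Anticommutes c (W (i + 1) (k + 1)) := by
  by_cases hk : (k : ℕ) + 1 < n
  · obtain ⟨k', hk'⟩ : ∃ k' : Fin n, (k' : ℕ) = k + 1 := ⟨⟨k + 1, hk⟩, rfl⟩
    have hσk : s k k' * σ i k' * s k k' = σ i k := by
      rw [hσ _ _ _ _ (Fin.ne_of_val_ne (by omega)), Equiv.swap_apply_right,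
        Equiv.swap_apply_of_ne_of_ne (Fin.ne_of_val_ne (by omega))
          (Fin.ne_of_val_ne (by omega))]
    have hg : kG act (s k k') * (kC act k' + kC act i)
        = (kC act k + kC act i) * kG act (s k k') := by
      rw [mul_add, add_mul, h.kG_s_mul_kC, h.kG_s_mul_kC, Equiv.swap_apply_right,
        Equiv.swap_apply_of_ne_of_ne (Fin.ne_of_val_ne (by omega))
          (Fin.ne_of_val_ne (by omega))]
    obtain ⟨ih, ih_anti⟩ := h.map_add_mul_kG_of_lt hσ hW_left hW_right hbase
      (show i < k' from Fin.lt_def.mpr (by omega))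
    rw [hW_right _ _ (by omega) hk, ← hσk]
    rw [hk'] at ih ih_anti
    exact h.map_conj_s hk' hg ih_anti ih
  by_cases hi : (i : ℕ) + 2 < n
  · obtain ⟨i', hi'⟩ : ∃ i' : Fin n, (i' : ℕ) = i + 1 := ⟨⟨i + 1, by omega⟩, rfl⟩
    have hσi : s i i' * σ i' k * s i i' = σ i k := by
      rw [hσ _ _ _ _ (Fin.ne_of_val_ne (by omega)), Equiv.swap_apply_right,
        Equiv.swap_apply_of_ne_of_ne (Fin.ne_of_val_ne (by omega))
          (Fin.ne_of_val_ne (by omega))]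
    have hg : kG act (s i i') * (kC act k + kC act i')
        = (kC act k + kC act i) * kG act (s i i') := by
      rw [mul_add, add_mul, h.kG_s_mul_kC, h.kG_s_mul_kC, Equiv.swap_apply_right,
        Equiv.swap_apply_of_ne_of_ne (Fin.ne_of_val_ne (by omega))
          (Fin.ne_of_val_ne (by omega))]
    obtain ⟨ih, ih_anti⟩ := h.map_add_mul_kG_of_lt hσ hW_left hW_right hbase
      (show i' < k from Fin.lt_def.mpr (by omega))
    rw [show (k : ℕ) + 1 = n by omega, hW_left _ (by omega), ← hσi]
    rw [hi', show (k : ℕ) + 1 = n by omega] at ih ih_anti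
    exact h.map_conj_s hi' hg ih_anti ih
  rw [show (i : ℕ) + 1 = n - 1 by omega, show (k : ℕ) + 1 = n by omega]
  exact hbase i k (by omega) (by omega)
termination_by (n - k) + (n - i)

theorem map_add_mul_kG (h : MapsSimpleReflections Φ c T s)
    (hσ : ∀ u v x y, x ≠ y →
      s u v * σ x y * s u v = σ (Equiv.swap u v x) (Equiv.swap u v y))
    (hσ_comm : ∀ i k, i ≠ k → σ i k = σ k i)
    (hW_left : ∀ i, i + 1 < n → W i n = -(T i * W (i + 1) n * T i))
    (hW_right : ∀ i j, i < j → j < n → W i j = -(T j * W i (j + 1) * T j))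
    (hW_comm : ∀ i j, i < j → W j i = W i j)
    (hbase : ∀ i k : Fin n, (i : ℕ) + 2 = n → (k : ℕ) + 1 = n →
      Φ ((kC act k + kC act i) * kG act (σ i k)) = -((Real.sqrt 2 : ℂ) * I) • W (n - 1) n ∧
        Anticommutes c (W (n - 1) n))
    {i k : Fin n} (hik : i ≠ k) :
    Φ ((kC act k + kC act i) * kG act (σ i k))
      = -(((Real.sqrt 2 : ℂ) * I) • W (k + 1) (i + 1)) := by
  rw [← neg_smul]
  rcases lt_or_gt_of_ne hik with hlt | hlt
  · rw [hW_comm _ _ (by omega)]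
    exact (h.map_add_mul_kG_of_lt hσ hW_left hW_right hbase hlt).1
  · rw [hσ_comm i k hik, add_comm]
    exact (h.map_add_mul_kG_of_lt hσ hW_left hW_right hbase hlt).1

end Bar

theorem map_kC_mul_kG_tau (h : MapsSimpleReflections Φ c T s) {τ : Fin n → G}
    (hτ : ∀ u v x, s u v * τ x * s u v = τ (Equiv.swap u v x)) (hTn : Anticommutes c (T n))
    (hbase : ∀ i : Fin n, (i : ℕ) + 1 = n → Φ (kC act i * kG act (τ i)) = -(I • T n))
    (i : Fin n) :
    Φ (kC act i * kG act (τ i)) = -(I • brBi T n (i + 1)) ∧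
      Anticommutes c (brBi T n (i + 1)) := by
  by_cases hi : (i : ℕ) + 1 < n
  · obtain ⟨i', hi'⟩ : ∃ i' : Fin n, (i' : ℕ) = i + 1 := ⟨⟨i + 1, hi⟩, rfl⟩
    have hτi : s i i' * τ i' * s i i' = τ i := by rw [hτ, Equiv.swap_apply_right]
    have hg : kG act (s i i') * kC act i' = kC act i * kG act (s i i') := by
      rw [h.kG_s_mul_kC, Equiv.swap_apply_right]
    obtain ⟨ih, ih_anti⟩ := h.map_kC_mul_kG_tau hτ hTn hbase i'
    rw [hi'] at ih ih_anti
    rw [← neg_smul] at ih ⊢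
    rw [brBi_eq_conj T hi, ← hτi]
    exact h.map_conj_s hi' hg ih_anti ih
  rw [show (i : ℕ) + 1 = n by omega, brBi_self T (by omega)]
  exact ⟨hbase i (by omega), hTn⟩
termination_by n - (i : ℕ)

end MapsSimpleReflections

end Reflections

section TypeA

variable {n : ℕ}

lemma qtcCA_mul_self (i : Fin n) : qtcCA i * qtcCA i = 1 := by
  unfold qtcCA
  rw [← map_mul, RingQuot.mkAlgHom_rel ℂ (TCRelA.csq i), map_one]

lemma qtcCA_anticomm {i j : Fin n} (h : i ≠ j) : qtcCA i * qtcCA j = -(qtcCA j * qtcCA i) := by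
  unfold qtcCA
  rw [← map_mul, RingQuot.mkAlgHom_rel ℂ (TCRelA.canti h), map_neg, map_mul]

lemma anticommutes_qtcTnA {k : ℕ} (h1 : 1 ≤ k) (h2 : k < n) :
    Anticommutes qtcCA (qtcTnA (n := n) k) := fun r => by
  unfold qtcCA qtcTnA tcTn
  rw [dif_pos ⟨h1, by omega⟩, ← map_mul,
    RingQuot.mkAlgHom_rel ℂ (TCRelA.ct r ⟨k - 1, by omega⟩), map_neg, map_mul]

lemma qtcTnA_succ (a : Fin (n - 1)) : qtcTnA (a + 1) = qtcTA a := by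
  unfold qtcTnA qtcTA tcTn
  rw [dif_pos ⟨by omega, by omega⟩]
  rfl

theorem mapsSimpleReflections_typeA (Φ : Smash n (Equiv.Perm (Fin n)) (actA n) ≃ₐ[ℂ] TCA n)
    (hc : ∀ i, Φ (kC (actA n) i) = qtcCA i)
    (hs : ∀ a : Fin (n - 1), Φ (kG (actA n) (simpleA a))
      = -(I • (betaAof qtcCA a * qtcTA a))) :
    MapsSimpleReflections Φ qtcCA qtcTnA Equiv.swap where
  map_kC := hc
  c_mul_self := qtcCA_mul_self
  c_anticomm _ _ := qtcCA_anticomm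
  anticommutes_T _ := anticommutes_qtcTnA
  act_s _ _ _ := rfl
  s_comm := Equiv.swap_comm
  s_conj u v x y := by rw [Equiv.swap_apply_apply, Equiv.swap_inv]
  map_kG_s a b hab := by
    obtain ⟨b, hb⟩ := b
    obtain rfl : b = a + 1 := hab
    have := hs ⟨a, by omega⟩
    rwa [← qtcTnA_succ] at this

end TypeA

section TypeB

variable {n : ℕ}

open Equiv

lemma qtcCB_mul_self (i : Fin n) : qtcCB i * qtcCB i = 1 := by
  unfold qtcCB
  rw [← map_mul, RingQuot.mkAlgHom_rel ℂ (TCRelB.csq i), map_one]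

lemma qtcCB_anticomm {i j : Fin n} (h : i ≠ j) : qtcCB i * qtcCB j = -(qtcCB j * qtcCB i) := by
  unfold qtcCB
  rw [← map_mul, RingQuot.mkAlgHom_rel ℂ (TCRelB.canti h), map_neg, map_mul]

lemma anticommutes_qtcTnB {k : ℕ} (h1 : 1 ≤ k) (h2 : k ≤ n) :
    Anticommutes qtcCB (qtcTnB (n := n) k) := fun r => by
  unfold qtcCB qtcTnB tcTn
  rw [dif_pos ⟨h1, h2⟩, ← map_mul,
    RingQuot.mkAlgHom_rel ℂ (TCRelB.ct r ⟨k - 1, by omega⟩), map_neg, map_mul]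

lemma qtcTnB_succ (a : Fin n) : qtcTnB (a + 1) = qtcTB a := by
  unfold qtcTnB qtcTB tcTn
  rw [dif_pos ⟨by omega, by omega⟩]
  rfl

lemma permAut_apply (σ : Perm (Fin n)) (f : SignFn n) (k : Fin n) :
    permAut n σ f k = f (σ.symm k) := rfl

lemma sB_comm (i k : Fin n) : sB i k = sB k i := by
  rw [sB, sB, swap_comm]

lemma sbarB_comm (i k : Fin n) : sbarB i k = sbarB k i := by
  simp only [sbarB, swap_comm i k, or_comm]

lemma sB_mul_mul_sB (u v : Fin n) (w : WB n) :
    sB u v * w * sB u v = ⟨permAut n (swap u v) w.left, swap u v * w.right * swap u v⟩ := by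
  ext <;> simp [sB]

lemma sB_conj_sB (u v x y : Fin n) :
    sB u v * sB x y * sB u v = sB (swap u v x) (swap u v y) := by
  rw [sB_mul_mul_sB, sB, sB, swap_apply_apply, swap_inv, map_one]

lemma sB_conj_sbarB (u v x y : Fin n) :
    sB u v * sbarB x y * sB u v = sbarB (swap u v x) (swap u v y) := by
  rw [sB_mul_mul_sB, sbarB, sbarB, swap_apply_apply, swap_inv]
  congr 1
  funext k
  simp [permAut_apply, swap_apply_eq_iff]

lemma sB_conj_tauB (u v x : Fin n) : sB u v * tauB x * sB u v = tauB (swap u v x) := by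
  rw [sB_mul_mul_sB, tauB, tauB, mul_one, swap_mul_self]
  congr 1
  funext k
  simp [permAut_apply, swap_apply_eq_iff]

lemma tauB_conj_sB {x y : Fin n} (h : x ≠ y) : tauB y * sB x y * tauB y = sbarB x y := by
  ext k
  · by_cases hx : k = x <;> by_cases hy : k = y <;>
      simp_all [tauB, sB, sbarB, permAut_apply, swap_apply_of_ne_of_ne]
  · simp [tauB, sB, sbarB]

lemma kG_tauB_mul_sub {i k : Fin n} (h : i ≠ k) :
    kG actB (tauB k) * (kC actB i - kC actB k) = (kC actB i + kC actB k) * kG actB (tauB k) := by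
  have hk : actB (tauB k) k = (-1, k) := by simp [actB, tauB]
  have hi : actB (tauB k) i = (1, i) := by simp [actB, tauB, h]
  rw [mul_sub, add_mul, kG_mul_kC_of_act_eq hi, kG_mul_kC, hk]
  module

theorem mapsSimpleReflections_typeB (Φ : Smash n (WB n) actB ≃ₐ[ℂ] TCB n)
    (hc : ∀ i, Φ (kC actB i) = qtcCB i)
    (hs : ∀ a : Fin n, Φ (kG actB (simpleB a)) = -(I • (betaBof qtcCB a * qtcTB a))) :
    MapsSimpleReflections Φ qtcCB qtcTnB sB where
  map_kC := hc
  c_mul_self := qtcCB_mul_self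
  c_anticomm _ _ := qtcCB_anticomm
  anticommutes_T _ h1 h2 := anticommutes_qtcTnB h1 h2.le
  act_s _ _ _ := by simp [actB, sB]
  s_comm := sB_comm
  s_conj := sB_conj_sB
  map_kG_s a b hab := by
    obtain ⟨b, hb⟩ := b
    obtain rfl : b = a + 1 := hab
    have := hs a
    rwa [simpleB, dif_pos hb, betaBof, dif_pos hb, ← qtcTnB_succ] at this

lemma map_kG_tauB_of_last (Φ : Smash n (WB n) actB ≃ₐ[ℂ] TCB n)
    (hs : ∀ a : Fin n, Φ (kG actB (simpleB a)) = -(I • (betaBof qtcCB a * qtcTB a)))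
    {k : Fin n} (hk : (k : ℕ) + 1 = n) :
    Φ (kG actB (tauB k)) = -(I • (qtcCB k * qtcTnB n)) := by
  have := hs k
  rwa [simpleB, dif_neg (by omega), betaBof, dif_neg (by omega), ← qtcTnB_succ, hk] at this

lemma map_kC_mul_kG_tauB_of_last (Φ : Smash n (WB n) actB ≃ₐ[ℂ] TCB n)
    (hc : ∀ i, Φ (kC actB i) = qtcCB i)
    (hs : ∀ a : Fin n, Φ (kG actB (simpleB a)) = -(I • (betaBof qtcCB a * qtcTB a)))
    {i : Fin n} (hi : (i : ℕ) + 1 = n) :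
    Φ (kC actB i * kG actB (tauB i)) = -(I • qtcTnB n) := by
  rw [map_mul, hc, map_kG_tauB_of_last Φ hs hi]
  exact mul_neg_I_smul_mul (qtcCB_mul_self i) _

/-- The base case `s̄_{n-1,n} = τ_n s_{n-1,n} τ_n` of type `B_n`. -/
theorem map_add_mul_kG_sbarB_of_last (Φ : Smash n (WB n) actB ≃ₐ[ℂ] TCB n)
    (hc : ∀ i, Φ (kC actB i) = qtcCB i)
    (hs : ∀ a : Fin n, Φ (kG actB (simpleB a)) = -(I • (betaBof qtcCB a * qtcTB a)))
    {i k : Fin n} (hi : (i : ℕ) + 2 = n) (hk : (k : ℕ) + 1 = n) :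
    Φ ((kC actB k + kC actB i) * kG actB (sbarB i k))
      = -((Real.sqrt 2 : ℂ) * I) • brBbar qtcTnB n (n - 1) n ∧
      Anticommutes (qtcCB (n := n)) (brBbar qtcTnB n (n - 1) n) := by
  have h := mapsSimpleReflections_typeB Φ hc hs
  have hik : i ≠ k := Fin.ne_of_val_ne (by omega)
  have hTn := anticommutes_qtcTnB (n := n) (k := n) (by omega) le_rfl
  have hTn' := anticommutes_qtcTnB (n := n) (k := n - 1) (by omega) (by omega)
  have hX : Φ ((kC actB i - kC actB k) * kG actB (sB k i))
      = -((Real.sqrt 2 : ℂ) * I) • qtcTnB (n - 1) := by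
    rw [h.map_sub_mul_kG hik.symm, show (k : ℕ) + 1 = (i + 1) + 1 by omega, brK_self_succ,
      show (i : ℕ) + 1 = n - 1 by omega]
    exact (neg_smul ((Real.sqrt 2 : ℂ) * I) (qtcTnB (n - 1))).symm
  rw [brBbar_pred_self _ (by omega), add_comm, ← tauB_conj_sB hik, sB_comm i k]
  exact ⟨map_mul_kG_conj Φ (kG_tauB_mul_sub hik) (map_kG_tauB_of_last Φ hs hk)
    (qtcCB_mul_self k) (hTn k) (hTn' k) hX, hTn.neg_conj hTn'⟩

end TypeB

section TypeD

variable {n : ℕ}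

open Equiv

lemma qtcCD_mul_self (i : Fin n) : qtcCD i * qtcCD i = 1 := by
  unfold qtcCD
  rw [← map_mul, RingQuot.mkAlgHom_rel ℂ (TCRelD.csq i), map_one]

lemma qtcCD_anticomm {i j : Fin n} (h : i ≠ j) : qtcCD i * qtcCD j = -(qtcCD j * qtcCD i) := by
  unfold qtcCD
  rw [← map_mul, RingQuot.mkAlgHom_rel ℂ (TCRelD.canti h), map_neg, map_mul]

lemma anticommutes_qtcTnD {k : ℕ} (h1 : 1 ≤ k) (h2 : k ≤ n) :
    Anticommutes qtcCD (qtcTnD (n := n) k) := fun r => by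
  unfold qtcCD qtcTnD tcTn
  rw [dif_pos ⟨h1, h2⟩, ← map_mul,
    RingQuot.mkAlgHom_rel ℂ (TCRelD.ct r ⟨k - 1, by omega⟩), map_neg, map_mul]

lemma qtcTnD_succ (a : Fin n) : qtcTnD (a + 1) = qtcTD a := by
  unfold qtcTnD qtcTD tcTn
  rw [dif_pos ⟨by omega, by omega⟩]
  rfl

lemma coe_sbarD {i j : Fin n} (h : i ≠ j) : (sbarD i j : WB n) = sbarB i j := by
  rw [sbarD, dif_neg h]

lemma sbarD_comm {i k : Fin n} (h : i ≠ k) : sbarD i k = sbarD k i :=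
  Subtype.ext (by rw [coe_sbarD h, coe_sbarD h.symm, sbarB_comm])

lemma sD_conj_sbarD (u v : Fin n) {x y : Fin n} (h : x ≠ y) :
    sD u v * sbarD x y * sD u v = sbarD (swap u v x) (swap u v y) :=
  Subtype.ext (by
    rw [Subgroup.coe_mul, Subgroup.coe_mul, coe_sbarD h, coe_sbarD ((swap u v).injective.ne h)]
    exact sB_conj_sbarB u v x y)

theorem mapsSimpleReflections_typeD (Φ : Smash n (WDsub n) actD ≃ₐ[ℂ] TCD n)
    (hc : ∀ i, Φ (kC actD i) = qtcCD i)
    (hs : ∀ a : Fin n, Φ (kG actD (simpleD a)) = -(I • (betaDof qtcCD a * qtcTD a))) :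
    MapsSimpleReflections Φ qtcCD qtcTnD sD where
  map_kC := hc
  c_mul_self := qtcCD_mul_self
  c_anticomm _ _ := qtcCD_anticomm
  anticommutes_T _ h1 h2 := anticommutes_qtcTnD h1 h2.le
  act_s _ _ _ := by simp [actD, actB, sD, sB]
  s_comm a b := Subtype.ext (sB_comm a b)
  s_conj u v x y := Subtype.ext (sB_conj_sB u v x y)
  map_kG_s a b hab := by
    obtain ⟨b, hb⟩ := b
    obtain rfl : b = a + 1 := hab
    have := hs a
    rwa [simpleD, dif_pos hb, betaDof, dif_pos hb, ← qtcTnD_succ] at this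

/-- In type `D_n` the base case `s̄_{n-1,n}` is the simple reflection `s_n`. -/
theorem map_add_mul_kG_sbarD_of_last (Φ : Smash n (WDsub n) actD ≃ₐ[ℂ] TCD n)
    (hc : ∀ i, Φ (kC actD i) = qtcCD i)
    (hs : ∀ a : Fin n, Φ (kG actD (simpleD a)) = -(I • (betaDof qtcCD a * qtcTD a)))
    {i k : Fin n} (hi : (i : ℕ) + 2 = n) (hk : (k : ℕ) + 1 = n) :
    Φ ((kC actD k + kC actD i) * kG actD (sbarD i k))
      = -((Real.sqrt 2 : ℂ) * I) • brDbar qtcTnD n (n - 1) n ∧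
      Anticommutes (qtcCD (n := n)) (brDbar qtcTnD n (n - 1) n) := by
  have hik : i ≠ k := Fin.ne_of_val_ne (by omega)
  have hsbar : sbarD i k = simpleD k := by
    rw [simpleD, dif_neg (by omega)]
    congr 1 <;> ext <;> simp only <;> omega
  have hβ : betaDof qtcCD k = (Real.sqrt 2 : ℂ)⁻¹ • (qtcCD i + qtcCD k) := by
    rw [betaDof, dif_neg (by omega)]
    congr 3 <;> ext <;> simp only <;> omega
  rw [hsbar, map_mul, map_add, hc, hc, hs k, hβ, ← qtcTnD_succ, hk, add_comm (qtcCD k),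
    brDbar_pred_self _ (by omega)]
  exact ⟨mul_neg_I_smul_inv_sqrt_two_smul_mul (add_mul_self_of_anticomm (qtcCD_mul_self i)
    (qtcCD_mul_self k) (qtcCD_anticomm hik)) _, anticommutes_qtcTnD (by omega) le_rfl⟩

end TypeD

/-- **Images of reflections under the isomorphism `Φ : C_n ⋊ ℂW → C_n ⊗ ℂW⁻`**
(Khongsap-Wang, Lemma 5.1).  If `Φ` is the superalgebra isomorphism which is the identity
on `C_n` and sends `s_i ↦ -√-1 β_i t_i`, then for `i ≠ k`:
`Φ((c_k - c_i)s_{ik}) = -√-2 [k,i]`; in types `D_n, B_n`,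
`Φ((c_k + c_i)s̄_{ik}) = -√-2 bar[k,i]`; and in type `B_n`, `Φ(c_i τ_i) = -√-1 bar[i]`
(where `√-2 = √2 √-1`). -/
theorem iso_image_of_reflections (n : ℕ) :
    (∀ Φ : Smash n (Equiv.Perm (Fin n)) (actA n) ≃ₐ[ℂ] TCA n,
      (∀ i, Φ (kC (actA n) i) = qtcCA i) →
      (∀ a : Fin (n - 1), Φ (kG (actA n) (simpleA a))
          = -(Complex.I • (betaAof qtcCA a * qtcTA a))) →
      ∀ i k : Fin n, i ≠ k →
        Φ ((kC (actA n) k - kC (actA n) i) * kG (actA n) (Equiv.swap i k))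
          = -((((Real.sqrt 2 : ℂ) * Complex.I)) •
              brK qtcTnA ((k : ℕ) + 1) ((i : ℕ) + 1))) ∧
    (4 ≤ n →
      ∀ Φ : Smash n (WDsub n) actD ≃ₐ[ℂ] TCD n,
      (∀ i, Φ (kC actD i) = qtcCD i) →
      (∀ a : Fin n, Φ (kG actD (simpleD a))
          = -(Complex.I • (betaDof qtcCD a * qtcTD a))) →
      ∀ i k : Fin n, i ≠ k →
        (Φ ((kC actD k - kC actD i) * kG actD (sD i k))
          = -((((Real.sqrt 2 : ℂ) * Complex.I)) •
              brK qtcTnD ((k : ℕ) + 1) ((i : ℕ) + 1))) ∧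
        (Φ ((kC actD k + kC actD i) * kG actD (sbarD i k))
          = -((((Real.sqrt 2 : ℂ) * Complex.I)) •
              brDbar qtcTnD n ((k : ℕ) + 1) ((i : ℕ) + 1)))) ∧
    (2 ≤ n →
      ∀ Φ : Smash n (WB n) actB ≃ₐ[ℂ] TCB n,
      (∀ i, Φ (kC actB i) = qtcCB i) →
      (∀ a : Fin n, Φ (kG actB (simpleB a))
          = -(Complex.I • (betaBof qtcCB a * qtcTB a))) →
      (∀ i k : Fin n, i ≠ k →
        (Φ ((kC actB k - kC actB i) * kG actB (sB i k))
          = -((((Real.sqrt 2 : ℂ) * Complex.I)) •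
              brK qtcTnB ((k : ℕ) + 1) ((i : ℕ) + 1))) ∧
        (Φ ((kC actB k + kC actB i) * kG actB (sbarB i k))
          = -((((Real.sqrt 2 : ℂ) * Complex.I)) •
              brBbar qtcTnB n ((k : ℕ) + 1) ((i : ℕ) + 1)))) ∧
      (∀ i : Fin n,
        Φ (kC actB i * kG actB (tauB i))
          = -(Complex.I • brBi qtcTnB n ((i : ℕ) + 1)))) := by
  refine ⟨fun Φ hc hs _ _ hik => (mapsSimpleReflections_typeA Φ hc hs).map_sub_mul_kG hik,
    fun _ Φ hc hs _ _ hik => ?_, fun hn Φ hc hs => ?_⟩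
  · have h := mapsSimpleReflections_typeD Φ hc hs
    exact ⟨h.map_sub_mul_kG hik, h.map_add_mul_kG (fun u v _ _ => sD_conj_sbarD u v)
      (fun _ _ => sbarD_comm) (fun _ => brDbar_eq_conj_left _) (fun _ _ => brDbar_eq_conj_right _)
      (fun _ _ => brDbar_comm _ _) (fun _ _ => map_add_mul_kG_sbarD_of_last Φ hc hs) hik⟩
  · have h := mapsSimpleReflections_typeB Φ hc hs
    refine ⟨fun _ _ hik => ⟨h.map_sub_mul_kG hik, h.map_add_mul_kG
      (fun u v x y _ => sB_conj_sbarB u v x y) (fun i k _ => sbarB_comm i k)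
      (fun _ => brBbar_eq_conj_left _) (fun _ _ => brBbar_eq_conj_right _)
      (fun _ _ => brBbar_comm _ _) (fun _ _ => map_add_mul_kG_sbarB_of_last Φ hc hs) hik⟩,
      fun i => (h.map_kC_mul_kG_tau sB_conj_tauB (anticommutes_qtcTnB (by omega) le_rfl)
        (fun _ => map_kC_mul_kG_tauB_of_last Φ hc hs) i).1⟩

end
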